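/- Fix an infinite cardinal κ and an ordinal α with κ ≤ α < κ⁺, and let W(α) be the set of allowed diagrams in the language L_α defined below. Then for every n with 1 ≤ n < ω and every w ∈ W(α) with domain {1,…,n}: w(n) = P_{n,γ,β} for some γ if and only if ER(w; W(α)) = β. -/

import Mathlib

/-!
A diagram of `W(α)` ending in a color with third index `β` extends exactly by the colors with
third index below `β`; such extensions exist, since any second index `γ < κ` (e.g. `0`) may be
chosen. By induction on `β`, the diagram therefore has existence rank at least every `γ < β`,
hence at least `β`, while its one-step extensions have rank below `β`, so its rank is exactly `β`.
-/

universe u v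

open Cardinal

/-- A relational coloring language: a family of pairwise disjoint nonempty sets `R_n`
(`n ≥ 1`) of `n`-ary colors, encoded as a type of colors together with an arity map
whose fibers over `n ≥ 1` are all nonempty. -/
structure ColoringLanguage : Type (u + 1) where
  Color : Type u
  arity : Color → ℕ
  arity_pos : ∀ r, 1 ≤ arity r
  exists_arity : ∀ n : ℕ, 1 ≤ n → ∃ r, arity r = n

namespace ColoringLanguage

variable (L : ColoringLanguage.{u})

/-- A diagram is (encoded as) a list of colors whose `i`-th entry (0-based) is an
`(i+1)`-ary color; it represents the function `w : [n] → R` with `w(k) ∈ R_k`. -/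
def IsDiagram (l : List L.Color) : Prop :=
  ∀ (i : ℕ) (h : i < l.length), L.arity l[i] = i + 1

/-- A set of allowed diagrams: a nonempty set of diagrams closed under restriction to
initial segments. -/
def IsAllowed (W : Set (List L.Color)) : Prop :=
  W.Nonempty ∧ (∀ l ∈ W, L.IsDiagram l) ∧ ∀ l ∈ W, ∀ m : ℕ, l.take m ∈ W

end ColoringLanguage

/-- `ERge W γ l` says that the existence rank of `l` with respect to `W` is `≥ γ`:
`ER(l;W) ≥ β + 1` iff some one-step extension `l' ∈ W` of `l` has `ER(l';W) ≥ β`,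
with the limit (and zero) clauses as usual. -/
noncomputable def ERge {C : Type v} (W : Set (List C)) : Ordinal.{u} → List C → Prop :=
  WellFounded.fix Ordinal.lt_wf fun α IH l =>
    ∀ β, ∀ h : β < α,
      ∃ l' ∈ W, l'.length = l.length + 1 ∧ l'.take l.length = l ∧ IH β h l'

/-- `prunedW W S` is `W_S`, the set of elements of `W` comparable with some element of `S`. -/
def prunedW {C : Type v} (W S : Set (List C)) : Set (List C) :=
  {w ∈ W | ∃ u ∈ S, w <+: u ∨ u <+: w}

/-- `quotW W wbar` is `W / w̄`: the set of diagrams `w / w̄` for `w ∈ W` extending `w̄`. -/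
def quotW {C : Type v} (W : Set (List C)) (wbar : List C) : Set (List C) :=
  (fun l => l.drop wbar.length) '' {l ∈ W | wbar <+: l}

/-- The beth function with base `κ`: `ℶ_0(κ) = κ`, `ℶ_{α+1}(κ) = 2 ^ ℶ_α(κ)`,
and suprema at limits. -/
noncomputable def bethF (κ : Cardinal.{u}) (o : Ordinal.{u}) : Cardinal.{u} :=
  Ordinal.limitRecOn o κ (fun _ ih => 2 ^ ih)
    fun o' _ ih => ⨆ b : Set.Iio o', ih b.1 b.2

/-- The cardinals `κ_α`: `κ_α = α` for finite `α`, suprema at limits, and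
`κ_{β+1} = 2 ^ κ_β` for `β ≥ ω`. -/
noncomputable def kappaC (o : Ordinal.{u}) : Cardinal.{u} :=
  Ordinal.limitRecOn o 0
    (fun o' ih => if o' < Ordinal.omega0 then ih + 1 else 2 ^ ih)
    fun o' _ ih => ⨆ b : Set.Iio o', ih b.1 b.2

namespace ColoringLanguage

variable (L : ColoringLanguage.{u}) {σ τ : Type u}

/-- `c` is an `L`-coloring of the set `M`: every finite nonempty `A ⊆ M` gets a color
of arity `|A|`. (Values of `c` outside of `M` are irrelevant.) -/
def IsColoring (M : Set σ) (c : Finset σ → L.Color) : Prop :=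
  ∀ A : Finset σ, ↑A ⊆ M → A.Nonempty → L.arity (c A) = A.card

/-- `B` is monochromatic for `c`: any two finite nonempty subsets of `B` of equal size
get the same color. -/
def Mono (c : Finset σ → L.Color) (B : Set σ) : Prop :=
  ∀ A₁ A₂ : Finset σ, ↑A₁ ⊆ B → ↑A₂ ⊆ B → A₁.Nonempty → A₁.card = A₂.card → c A₁ = c A₂

/-- `l` is the diagram of the (monochromatic) finite set `B` under `c`. -/
def DiagramOf (c : Finset σ → L.Color) (B : Finset σ) (l : List L.Color) : Prop :=
  l.length = B.card ∧ ∀ A : Finset σ, A ⊆ B → A.Nonempty → l[A.card - 1]? = some (c A)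

/-- `(M,c)` is a member of the coloring class `K(W)`: `c` is an `L`-coloring of `M`
and every finite nonempty monochromatic subset of `M` has its diagram in `W`. -/
def MemK (W : Set (List L.Color)) (M : Set σ) (c : Finset σ → L.Color) : Prop :=
  L.IsColoring M c ∧
    ∀ B : Finset σ, ↑B ⊆ M → B.Nonempty → L.Mono c ↑B → ∃ l ∈ W, L.DiagramOf c B l

/-- `(M,c)` is a substructure of `(N,c')`. -/
def Substruct (M : Set σ) (c : Finset σ → L.Color) (N : Set σ)
    (c' : Finset σ → L.Color) : Prop :=
  M ⊆ N ∧ ∀ A : Finset σ, ↑A ⊆ M → A.Nonempty → c A = c' A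

/-- `f` is an embedding of `(M,c)` into `(N,c')`. -/
def Emb (f : σ → τ) (M : Set σ) (c : Finset σ → L.Color) (N : Set τ)
    (c' : Finset τ → L.Color) : Prop :=
  Set.InjOn f M ∧ f '' M ⊆ N ∧
    ∀ A : Finset σ, ↑A ⊆ M → A.Nonempty →
      haveI := Classical.decEq τ
      c' (A.image f) = c A

/-- `K(W)` has the amalgamation property for models of size `lam`. -/
def HasAPAt (W : Set (List L.Color)) (lam : Cardinal.{u}) : Prop :=
  ∀ (σ : Type u) (M₀ M₁ M₂ : Set σ) (c₀ c₁ c₂ : Finset σ → L.Color),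
    L.MemK W M₀ c₀ → L.MemK W M₁ c₁ → L.MemK W M₂ c₂ →
    Cardinal.mk ↥M₀ = lam → Cardinal.mk ↥M₁ = lam → Cardinal.mk ↥M₂ = lam →
    L.Substruct M₀ c₀ M₁ c₁ → L.Substruct M₀ c₀ M₂ c₂ →
    ∃ (τ : Type u) (N : Set τ) (c : Finset τ → L.Color) (f₁ f₂ : σ → τ),
      L.MemK W N c ∧ L.Emb f₁ M₁ c₁ N c ∧ L.Emb f₂ M₂ c₂ N c ∧
      ∀ x ∈ M₀, f₁ x = f₂ x

/-- `K(W)` has the disjoint amalgamation property for models of size `lam`. -/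
def HasDAPAt (W : Set (List L.Color)) (lam : Cardinal.{u}) : Prop :=
  ∀ (σ : Type u) (M₀ M₁ M₂ : Set σ) (c₀ c₁ c₂ : Finset σ → L.Color),
    L.MemK W M₀ c₀ → L.MemK W M₁ c₁ → L.MemK W M₂ c₂ →
    Cardinal.mk ↥M₀ = lam → Cardinal.mk ↥M₁ = lam → Cardinal.mk ↥M₂ = lam →
    L.Substruct M₀ c₀ M₁ c₁ → L.Substruct M₀ c₀ M₂ c₂ →
    ∃ (τ : Type u) (N : Set τ) (c : Finset τ → L.Color) (f₁ f₂ : σ → τ),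
      L.MemK W N c ∧ L.Emb f₁ M₁ c₁ N c ∧ L.Emb f₂ M₂ c₂ N c ∧
      (∀ x ∈ M₀, f₁ x = f₂ x) ∧ f₁ '' M₁ ∩ f₂ '' M₂ = f₁ '' M₀

end ColoringLanguage

/-- The colors of the language `L_α` of [BKS]: `P_{n,γ,β}` encoded as the triple
`(n, γ, β)`, where either `n = 1`, `γ ≤ κ`, `β = α`, or `2 ≤ n`, `γ < κ`, `β ≤ α`. -/
def ExColor (κ : Cardinal.{u}) (α : Ordinal.{u}) : Type (u + 1) :=
  {p : ℕ × Ordinal.{u} × Ordinal.{u} //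
    (p.1 = 1 ∧ p.2.1 ≤ κ.ord ∧ p.2.2 = α) ∨ (2 ≤ p.1 ∧ p.2.1 < κ.ord ∧ p.2.2 ≤ α)}

/-- The language `L_α` of [BKS], as a relational coloring language. -/
noncomputable def ExLang (κ : Cardinal.{u}) (α : Ordinal.{u}) (hκ : ℵ₀ ≤ κ) :
    ColoringLanguage.{u + 1} where
  Color := ExColor κ α
  arity r := r.1.1
  arity_pos := by
    intro r
    show 1 ≤ r.1.1
    rcases r.2 with ⟨h, -⟩ | ⟨h, -⟩ <;> omega
  exists_arity := by
    intro n hn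
    have hκ0 : (0 : Ordinal.{u}) < κ.ord := by
      have h0 : (0 : Cardinal.{u}) < κ := lt_of_lt_of_le Cardinal.aleph0_pos hκ
      simpa using Cardinal.ord_lt_ord.mpr h0
    rcases Nat.lt_or_ge n 2 with h | h
    · have hn1 : n = 1 := by omega
      subst hn1
      exact ⟨⟨(1, 0, α), Or.inl ⟨rfl, zero_le, rfl⟩⟩, rfl⟩
    · exact ⟨⟨(n, 0, 0), Or.inr ⟨h, hκ0, zero_le⟩⟩, rfl⟩

/-- The set of allowed diagrams `W(α)`: diagrams in `L_α` whose third indices are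
strictly decreasing. -/
def ExW (κ : Cardinal.{u}) (α : Ordinal.{u}) : Set (List (ExColor κ α)) :=
  {l | (∀ (i : ℕ) (h : i < l.length), (l[i]).1.1 = i + 1) ∧
    ∀ (i j : ℕ) (hi : i < l.length) (hj : j < l.length),
      i < j → (l[j]).1.2.2 < (l[i]).1.2.2}

section ExistenceRank

variable {C : Type v} (W : Set (List C))

def ERankEq (a : Ordinal.{u}) (l : List C) : Prop :=
  ERge W a l ∧ ¬ ERge W (a + 1) l

theorem ERge_iff (a : Ordinal.{u}) (l : List C) :
    ERge W a l ↔ ∀ β < a, ∃ l' ∈ W, l'.length = l.length + 1 ∧ l'.take l.length = l ∧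
      ERge W β l' := by
  unfold ERge
  rw [WellFounded.fix_eq]

theorem ERge_iff_append (a : Ordinal.{u}) (l : List C) :
    ERge W a l ↔ ∀ β < a, ∃ c, l ++ [c] ∈ W ∧ ERge W β (l ++ [c]) := by
  rw [ERge_iff]
  refine forall₂_congr fun β _ => ⟨?_, ?_⟩
  · rintro ⟨l', hl', hlen, htake, hβ⟩
    obtain ⟨c, hc⟩ := List.length_eq_one_iff.mp
      (show (l'.drop l.length).length = 1 by simp [hlen])
    have hl'_eq : l' = l ++ [c] := by rw [← List.take_append_drop l.length l', htake, hc]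
    exact ⟨c, hl'_eq ▸ hl', hl'_eq ▸ hβ⟩
  · rintro ⟨c, hc, hβ⟩
    exact ⟨l ++ [c], hc, by simp, List.take_left' rfl, hβ⟩

variable {W}

theorem ERge.mono {a b : Ordinal.{u}} (hab : a ≤ b) {l : List C} (hb : ERge W b l) :
    ERge W a l := by
  rw [ERge_iff] at hb ⊢
  exact fun β hβ => hb β (hβ.trans_le hab)

theorem le_of_ERge_of_not_ERge_succ {a b : Ordinal.{u}} {l : List C} (ha : ERge W a l)
    (hb : ¬ ERge W (b + 1) l) : a ≤ b :=
  le_of_not_gt fun hba => hb (ha.mono (Order.add_one_le_of_lt hba))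

theorem ERankEq.unique {a b : Ordinal.{u}} {l : List C} (ha : ERankEq W a l)
    (hb : ERankEq W b l) : a = b :=
  le_antisymm (le_of_ERge_of_not_ERge_succ ha.1 hb.2) (le_of_ERge_of_not_ERge_succ hb.1 ha.2)

end ExistenceRank

namespace ExColor

variable {κ : Cardinal.{u}} {α : Ordinal.{u}}

/-- The third index `β` of the color `P_{n,γ,β}`. -/
def level (r : ExColor κ α) : Ordinal.{u} := r.1.2.2

theorem level_le (r : ExColor κ α) : r.level ≤ α := by
  rcases r.2 with ⟨-, -, h⟩ | ⟨-, -, h⟩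
  exacts [h.le, h]

def mk (hκ : κ ≠ 0) (n : ℕ) (hn : 2 ≤ n) (β : Ordinal.{u}) (hβ : β ≤ α) : ExColor κ α :=
  ⟨(n, 0, β), Or.inr ⟨hn, Cardinal.ord_pos.mpr (pos_iff_ne_zero.mpr hκ), hβ⟩⟩

def Descends (a b : ExColor κ α) : Prop := b.level < a.level

instance : Trans (Descends (κ := κ) (α := α)) Descends Descends :=
  ⟨fun hab hbc => lt_trans hbc hab⟩

end ExColor

section ExW

variable {κ : Cardinal.{u}} {α : Ordinal.{u}}

theorem mem_ExW_iff {l : List (ExColor κ α)} :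
    l ∈ ExW κ α ↔ (∀ (i : ℕ) (h : i < l.length), (l[i]).1.1 = i + 1) ∧
      l.IsChain ExColor.Descends := by
  rw [List.isChain_iff_pairwise, List.pairwise_iff_getElem]
  rfl

theorem append_singleton_mem_ExW_iff {w : List (ExColor κ α)} {c : ExColor κ α} :
    w ++ [c] ∈ ExW κ α ↔ w ∈ ExW κ α ∧ c.1.1 = w.length + 1 ∧
      ∀ r ∈ w.getLast?, c.level < r.level := by
  have harity : (∀ (i : ℕ) (h : i < (w ++ [c]).length), ((w ++ [c])[i]).1.1 = i + 1) ↔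
      (∀ (i : ℕ) (h : i < w.length), (w[i]).1.1 = i + 1) ∧ c.1.1 = w.length + 1 := by
    refine ⟨fun h => ⟨fun i hi => ?_, ?_⟩, fun ⟨hw, hc⟩ i hi => ?_⟩
    · have := h i (by simp; omega)
      rwa [List.getElem_append_left hi] at this
    · simpa using h w.length (by simp)
    · rw [List.getElem_append]
      split_ifs with hiw
      · exact hw i hiw
      · simp only [List.length_append, List.length_singleton] at hi
        simp [hc, show i = w.length by omega]
  simp only [mem_ExW_iff, harity, List.isChain_append, List.isChain_singleton, true_and,
    List.head?_singleton, Option.mem_some_iff, forall_eq', ExColor.Descends]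
  tauto

theorem arity_eq_length_of_mem_getLast? {w : List (ExColor κ α)} (hw : w ∈ ExW κ α)
    {r : ExColor κ α} (hr : r ∈ w.getLast?) : r.1.1 = w.length := by
  rw [Option.mem_def, List.getLast?_eq_getElem?, List.getElem?_eq_some_iff] at hr
  obtain ⟨h, rfl⟩ := hr
  have := hw.1 _ h
  omega

theorem ERankEq_level_of_mem_getLast? (hκ : κ ≠ 0) {w : List (ExColor κ α)}
    (hw : w ∈ ExW κ α) {r : ExColor κ α} (hr : r ∈ w.getLast?) :
    ERankEq (ExW κ α) r.level w := by
  generalize hβ : r.level = β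
  induction β using WellFoundedLT.induction generalizing w r with
  | ind β IH =>
  constructor
  · rw [ERge_iff_append]
    intro γ hγ
    have hlen : 1 ≤ w.length := List.length_pos_of_mem (List.mem_of_getLast? hr)
    let c : ExColor κ α :=
      ExColor.mk hκ (w.length + 1) (by omega) γ (hγ.le.trans (hβ ▸ r.level_le))
    have hc : w ++ [c] ∈ ExW κ α := by
      refine append_singleton_mem_ExW_iff.mpr ⟨hw, rfl, fun r' hr' => ?_⟩
      obtain rfl := Option.mem_unique hr' hr
      exact hβ ▸ hγ
    exact ⟨c, hc, (IH γ hγ hc (r := c) (by simp) rfl).1⟩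
  · rw [ERge_iff_append]
    intro h
    obtain ⟨c, hc, hcβ⟩ := h β (Order.lt_add_one_iff.mpr le_rfl)
    have hlt : c.level < β := hβ ▸ (append_singleton_mem_ExW_iff.mp hc).2.2 r hr
    exact (IH _ hlt hc (r := c) (by simp) rfl).2 (hcβ.mono (Order.add_one_le_of_lt hlt))

end ExW

theorem stmt18_general (κ : Cardinal.{u}) (α : Ordinal.{u}) (hκ : ℵ₀ ≤ κ) :
    ∀ n : ℕ, 1 ≤ n → ∀ w ∈ ExW κ α, w.length = n → ∀ β : Ordinal.{u},
      ((∃ r : ExColor κ α, w[n - 1]? = some r ∧ ∃ γ : Ordinal.{u}, r.1 = (n, γ, β)) ↔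
        (ERge (ExW κ α) β w ∧ ¬ ERge (ExW κ α) (β + 1) w)) := by
  rintro n hn w hw rfl β
  obtain ⟨r, hr⟩ : ∃ r, w.getLast? = some r :=
    ⟨_, List.getLast?_eq_some_getLast (List.ne_nil_of_length_pos hn)⟩
  have hrank := ERankEq_level_of_mem_getLast? (aleph0_pos.trans_le hκ).ne' hw hr
  rw [← List.getLast?_eq_getElem?, hr]
  change _ ↔ ERankEq (ExW κ α) β w
  constructor
  · rintro ⟨r', hr', γ, hr'_eq⟩
    obtain rfl := Option.some_inj.mp hr'
    simpa [ExColor.level, hr'_eq] using hrank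
  · intro hβ
    refine ⟨r, rfl, r.1.2.1, ?_⟩
    rw [← hrank.unique hβ, ← arity_eq_length_of_mem_getLast? hw hr]
    rfl

/-- in `W(α)` (for `κ ≤ α < κ⁺`, `κ` infinite), for `w ∈ W(α)` with
domain `[n]` (`n ≥ 1`): `w(n) = P_{n,γ,β}` for some `γ` iff `ER(w;W(α)) = β`. -/
theorem stmt18 (κ : Cardinal.{u}) (α : Ordinal.{u}) (hκ : ℵ₀ ≤ κ)
    (hκα : κ.ord ≤ α) (hα : α < (Order.succ κ).ord) :
    ∀ n : ℕ, 1 ≤ n → ∀ w ∈ ExW κ α, w.length = n → ∀ β : Ordinal.{u},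
      ((∃ r : ExColor κ α, w[n - 1]? = some r ∧ ∃ γ : Ordinal.{u}, r.1 = (n, γ, β)) ↔
        (ERge (ExW κ α) β w ∧ ¬ ERge (ExW κ α) (β + 1) w)) :=
  stmt18_general κ α hκ
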